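/- Let k be a field and F = x_n·f_k(x₀,…,x_{n−1}) + f_{k+1}(x₀,…,x_{n−1}) with f_k, f_{k+1} homogeneous of degrees k and k+1 over k, f_k ≠ 0. Then the map (x₀:⋯:x_{n−1}) ↦ (x₀:⋯:x_{n−1}:−f_{k+1}/f_k) defines a bijection from the open set {f_k ≠ 0} ⊆ P^{n−1}(k) onto Z(F) ∖ Z(F, f_k) ⊆ P^n(k), with inverse given by forgetting the last coordinate. -/

import Mathlib

open MvPolynomial
open scoped LinearAlgebra.Projectivization

/-!
On the chart `f_k ≠ 0` the equation `F = xₙ f_k + f_{k+1} = 0` is linear in `xₙ`, so a zero of `F`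
there is the lift `(v : -f_{k+1}(v) / f_k(v))` of its first `n` coordinates `v`. Homogeneity of
degrees `d` and `d + 1` makes the lift commute with scaling, so it descends to projective points.
Conversely, forgetting the last coordinate of such a zero never gives `0`: since `f_{k+1}(0) = 0`,
the whole vector would vanish.
-/

theorem MvPolynomial.IsHomogeneous.eval_smul {σ R : Type*} [CommSemiring R]
    {φ : MvPolynomial σ R} {m : ℕ} (hφ : φ.IsHomogeneous m) (c : R) (x : σ → R) :
    eval (c • x) φ = c ^ m * eval x φ := by
  rw [eval_eq, eval_eq, Finset.mul_sum]
  refine Finset.sum_congr rfl fun e he => ?_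
  have hm : ∑ i ∈ e.support, e i = m := by
    simpa [Finsupp.weight_apply, Finsupp.sum] using hφ (mem_support_iff.mp he)
  simp only [Pi.smul_apply, smul_eq_mul, mul_pow, Finset.prod_mul_distrib,
    Finset.prod_pow_eq_pow_sum, hm]
  ring

theorem MvPolynomial.IsHomogeneous.eval_smul_eq_zero_iff {σ R : Type*} [CommRing R]
    [NoZeroDivisors R] {φ : MvPolynomial σ R} {m : ℕ} (hφ : φ.IsHomogeneous m) {c : R}
    (hc : c ≠ 0) (x : σ → R) :
    eval (c • x) φ = 0 ↔ eval x φ = 0 := by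
  rw [hφ.eval_smul, mul_eq_zero, or_iff_right (pow_ne_zero m hc)]

namespace Projectivization

variable {K V : Type*} [DivisionRing K] [AddCommGroup V] [Module K V]

variable (K) in
theorem exists_rep_mk_eq_smul {v : V} (hv : v ≠ 0) :
    ∃ c : K, c ≠ 0 ∧ (mk K v hv).rep = c • v := by
  obtain ⟨a, ha⟩ := exists_smul_eq_mk_rep K v hv
  exact ⟨a, a.ne_zero, ha.symm⟩

theorem mk_eq_of_smul_rep_eq {v : V} (hv : v ≠ 0) {p : ℙ K V} {c : K} (h : c • p.rep = v) :
    mk K v hv = p := by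
  conv_rhs => rw [← p.mk_rep]
  exact (mk_eq_mk_iff' K _ _ _ _).2 ⟨c, h⟩

end Projectivization

section Graph

variable {k : Type*} [Field k] {n d : ℕ} {fk fk1 : MvPolynomial (Fin n) k}

noncomputable def graphPoly (fk fk1 : MvPolynomial (Fin n) k) : MvPolynomial (Fin (n + 1)) k :=
  X (Fin.last n) * rename Fin.castSucc fk + rename Fin.castSucc fk1

theorem eval_graphPoly (w : Fin (n + 1) → k) :
    eval w (graphPoly fk fk1) =
      w (Fin.last n) * eval (w ∘ Fin.castSucc) fk + eval (w ∘ Fin.castSucc) fk1 := by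
  simp [graphPoly, eval_rename]

theorem isHomogeneous_graphPoly (hfk : fk.IsHomogeneous d) (hfk1 : fk1.IsHomogeneous (d + 1)) :
    (graphPoly fk fk1).IsHomogeneous (d + 1) := by
  rw [add_comm d 1] at hfk1 ⊢
  exact ((isHomogeneous_X k _).mul hfk.rename_isHomogeneous).add hfk1.rename_isHomogeneous

noncomputable def graphLift (fk fk1 : MvPolynomial (Fin n) k) (v : Fin n → k) : Fin (n + 1) → k :=
  Fin.snoc v (-eval v fk1 / eval v fk)

theorem graphLift_comp_castSucc (v : Fin n → k) : graphLift fk fk1 v ∘ Fin.castSucc = v :=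
  Fin.snoc_comp_castSucc

variable (fk fk1) in
theorem graphLift_ne_zero {v : Fin n → k} (hv : v ≠ 0) : graphLift fk fk1 v ≠ 0 := by
  intro h
  apply hv
  rw [← graphLift_comp_castSucc (fk := fk) (fk1 := fk1) v, h]
  rfl

theorem graphLift_zero (hfk1 : fk1.IsHomogeneous (d + 1)) : graphLift fk fk1 0 = 0 := by
  have h : eval 0 fk1 = 0 := by simpa using hfk1.eval_smul 0 0
  simp only [graphLift, h, neg_zero, zero_div]
  exact Fin.snoc_init_self (0 : Fin (n + 1) → k)

theorem graphLift_smul (hfk : fk.IsHomogeneous d) (hfk1 : fk1.IsHomogeneous (d + 1))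
    {c : k} (hc : c ≠ 0) (v : Fin n → k) : graphLift fk fk1 (c • v) = c • graphLift fk fk1 v := by
  have hlast : -(c ^ (d + 1) * eval v fk1) / (c ^ d * eval v fk) =
      c • (-eval v fk1 / eval v fk) := by
    rw [smul_eq_mul, pow_succ, mul_assoc, ← mul_neg, mul_div_mul_left _ _ (pow_ne_zero d hc)]
    ring
  rw [graphLift, graphLift, hfk.eval_smul, hfk1.eval_smul, hlast]
  exact (Fin.comp_snoc (c • ·) v _).symm

theorem eval_graphPoly_graphLift {v : Fin n → k} (hv : eval v fk ≠ 0) :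
    eval (graphLift fk fk1 v) (graphPoly fk fk1) = 0 := by
  rw [eval_graphPoly, graphLift_comp_castSucc, graphLift, Fin.snoc_last]
  field_simp
  ring

theorem graphLift_comp_castSucc_of_eval_graphPoly_eq_zero {w : Fin (n + 1) → k}
    (hw : eval w (graphPoly fk fk1) = 0) (hfkw : eval (w ∘ Fin.castSucc) fk ≠ 0) :
    graphLift fk fk1 (w ∘ Fin.castSucc) = w := by
  rw [eval_graphPoly] at hw
  conv_rhs => rw [← Fin.snoc_init_self w]
  rw [graphLift]
  congr 1
  rw [div_eq_iff hfkw]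
  linear_combination -hw

theorem comp_castSucc_ne_zero_of_eval_graphPoly_eq_zero (hfk1 : fk1.IsHomogeneous (d + 1))
    {w : Fin (n + 1) → k} (hw0 : w ≠ 0) (hw : eval w (graphPoly fk fk1) = 0)
    (hfkw : eval (w ∘ Fin.castSucc) fk ≠ 0) : w ∘ Fin.castSucc ≠ 0 := by
  intro h
  apply hw0
  rw [← graphLift_comp_castSucc_of_eval_graphPoly_eq_zero hw hfkw, h, graphLift_zero hfk1]

open Projectivization

noncomputable def graphEquiv (hfk : fk.IsHomogeneous d) (hfk1 : fk1.IsHomogeneous (d + 1)) :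
    {x : ℙ k (Fin n → k) // eval x.rep fk ≠ 0} ≃
      {y : ℙ k (Fin (n + 1) → k) //
        eval y.rep (graphPoly fk fk1) = 0 ∧ eval (y.rep ∘ Fin.castSucc) fk ≠ 0} where
  toFun x := ⟨mk k (graphLift fk fk1 x.1.rep) (graphLift_ne_zero fk fk1 x.1.rep_nonzero), by
    obtain ⟨c, hc, hrep⟩ := exists_rep_mk_eq_smul k (graphLift_ne_zero fk fk1 x.1.rep_nonzero)
    rw [hrep, (isHomogeneous_graphPoly hfk hfk1).eval_smul_eq_zero_iff hc]
    refine ⟨eval_graphPoly_graphLift x.2, ?_⟩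
    change eval (c • (graphLift fk fk1 x.1.rep ∘ Fin.castSucc)) fk ≠ 0
    rw [graphLift_comp_castSucc, ne_eq, hfk.eval_smul_eq_zero_iff hc]
    exact x.2⟩
  invFun y := ⟨mk k (y.1.rep ∘ Fin.castSucc)
      (comp_castSucc_ne_zero_of_eval_graphPoly_eq_zero hfk1 y.1.rep_nonzero y.2.1 y.2.2), by
    obtain ⟨c, hc, hrep⟩ := exists_rep_mk_eq_smul k
      (comp_castSucc_ne_zero_of_eval_graphPoly_eq_zero hfk1 y.1.rep_nonzero y.2.1 y.2.2)
    rw [hrep, ne_eq, hfk.eval_smul_eq_zero_iff hc]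
    exact y.2.2⟩
  left_inv x := by
    obtain ⟨c, -, hrep⟩ := exists_rep_mk_eq_smul k (graphLift_ne_zero fk fk1 x.1.rep_nonzero)
    refine Subtype.ext (mk_eq_of_smul_rep_eq _ (c := c) ?_)
    rw [hrep]
    exact congrArg (c • ·) (graphLift_comp_castSucc _).symm
  right_inv y := by
    obtain ⟨c, hc, hrep⟩ := exists_rep_mk_eq_smul k
      (comp_castSucc_ne_zero_of_eval_graphPoly_eq_zero hfk1 y.1.rep_nonzero y.2.1 y.2.2)
    refine Subtype.ext (mk_eq_of_smul_rep_eq _ (c := c) ?_)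
    rw [hrep, graphLift_smul hfk hfk1 hc,
      graphLift_comp_castSucc_of_eval_graphPoly_eq_zero y.2.1 y.2.2]

end Graph

theorem graph_bijection_general {k : Type} [Field k] {n d : ℕ}
    (fk fk1 : MvPolynomial (Fin n) k)
    (hfk : fk.IsHomogeneous d) (hfk1 : fk1.IsHomogeneous (d + 1)) :
    ∃ e : {x : Projectivization k (Fin n → k) // eval x.rep fk ≠ 0} ≃
          {y : Projectivization k (Fin (n + 1) → k) //
            eval y.rep (X (Fin.last n) * rename Fin.castSucc fk + rename Fin.castSucc fk1) = 0
            ∧ eval (y.rep ∘ Fin.castSucc) fk ≠ 0},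
      (∀ x, ∃ c : k, c ≠ 0 ∧
        (e x).val.rep = c • (Fin.snoc x.val.rep (-(eval x.val.rep fk1) / eval x.val.rep fk) : Fin (n + 1) → k)) ∧
      (∀ y, ∃ c : k, c ≠ 0 ∧ (e.symm y).val.rep = c • (y.val.rep ∘ Fin.castSucc)) :=
  ⟨graphEquiv hfk hfk1, fun _ => Projectivization.exists_rep_mk_eq_smul k _,
    fun _ => Projectivization.exists_rep_mk_eq_smul k _⟩

/-- For F = xₙ·f_k + f_{k+1}, the map (x₀:⋯:x_{n-1}) ↦ (x₀:⋯:x_{n-1}:-f_{k+1}/f_k)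
is a bijection from {f_k ≠ 0} ⊆ ℙ^{n-1} onto Z(F) ∖ Z(F, f_k) ⊆ ℙ^n, with inverse
forgetting the last coordinate (equalities of points expressed via representatives
up to a nonzero scalar). -/
theorem graph_bijection {k : Type} [Field k] {n d : ℕ}
    (fk fk1 : MvPolynomial (Fin n) k)
    (hfk : fk.IsHomogeneous d) (hfk1 : fk1.IsHomogeneous (d + 1)) (h0 : fk ≠ 0) :
    ∃ e : {x : Projectivization k (Fin n → k) // eval x.rep fk ≠ 0} ≃
          {y : Projectivization k (Fin (n + 1) → k) //
            eval y.rep (X (Fin.last n) * rename Fin.castSucc fk + rename Fin.castSucc fk1) = 0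
            ∧ eval (y.rep ∘ Fin.castSucc) fk ≠ 0},
      (∀ x, ∃ c : k, c ≠ 0 ∧
        (e x).val.rep = c • (Fin.snoc x.val.rep (-(eval x.val.rep fk1) / eval x.val.rep fk) : Fin (n + 1) → k)) ∧
      (∀ y, ∃ c : k, c ≠ 0 ∧ (e.symm y).val.rep = c • (y.val.rep ∘ Fin.castSucc)) :=
  graph_bijection_general fk fk1 hfk hfk1
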